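/- Suppose α > 0 satisfies max_{y∈Y} xᵀAy − v* ≥ α‖x − Π_{X*}(x)‖ for all x ∈ X. Let μ > 0, let σ ∈ X, and let x^μ_σ be the unique minimizer over X of x ↦ max_{y∈Y} xᵀAy + (μ/2)‖x − σ‖². If x^μ_σ ∉ X*, then for every x* ∈ X* and every σ' ∈ X: (1/2)‖x* − σ'‖² ≤ (1/2)‖x* − σ‖² − α²/(4μ²) + (D²μ²/α²)‖x^μ_σ − σ'‖². -/

import Mathlib

open scoped RealInnerProductSpace Classical

noncomputable section

abbrev E (k : ℕ) : Type := EuclideanSpace ℝ (Fin k)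

/-- Interpret a plain vector as an element of Euclidean space. -/
def toE {k : ℕ} (v : Fin k → ℝ) : E k := (WithLp.equiv 2 (Fin k → ℝ)).symm v

/-- The bilinear payoff `xᵀ A y`. -/
def pay {m n : ℕ} (A : Matrix (Fin m) (Fin n) ℝ) (x : E m) (y : E n) : ℝ :=
  ⟪x, toE (A.mulVec y)⟫

/-- Euclidean projection onto a set (well-defined for nonempty closed convex sets). -/
def projOn {k : ℕ} (S : Set (E k)) (x : E k) : E k :=
  if h : ∃ p ∈ S, ∀ q ∈ S, ‖x - p‖ ≤ ‖x - q‖ then h.choose else x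

/-- The largest singular value (ℓ²-operator norm) of a matrix. -/
def matNorm {m n : ℕ} (A : Matrix (Fin m) (Fin n) ℝ) : ℝ :=
  ‖(Matrix.toEuclideanLin A).toContinuousLinearMap‖

def gmax {m n : ℕ} (A : Matrix (Fin m) (Fin n) ℝ) (Y : Set (E n)) (x : E m) : ℝ :=
  sSup ((pay A x) '' Y)

def vStar {m n : ℕ} (A : Matrix (Fin m) (Fin n) ℝ) (X : Set (E m)) (Y : Set (E n)) : ℝ :=
  sInf (gmax A Y '' X)

def minimaxSet {m n : ℕ} (A : Matrix (Fin m) (Fin n) ℝ) (X : Set (E m)) (Y : Set (E n)) :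
    Set (E m) :=
  {x | x ∈ X ∧ ∀ x' ∈ X, gmax A Y x ≤ gmax A Y x'}

def hmin {m n : ℕ} (A : Matrix (Fin m) (Fin n) ℝ) (X : Set (E m)) (μ : ℝ) (y : E n) : ℝ :=
  sInf ((fun x => pay A x y + μ / 2 * ‖x‖ ^ 2) '' X)

def maximinSet {m n : ℕ} (A : Matrix (Fin m) (Fin n) ℝ) (X : Set (E m)) (Y : Set (E n))
    (μ : ℝ) : Set (E n) :=
  {y | y ∈ Y ∧ ∀ y' ∈ Y, hmin A X μ y' ≤ hmin A X μ y}

def diamXY {m n : ℕ} (X : Set (E m)) (Y : Set (E n)) : ℝ :=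
  sSup {d | ∃ x ∈ X, ∃ y ∈ Y, ∃ x' ∈ X, ∃ y' ∈ Y,
    d = Real.sqrt (‖x - x'‖ ^ 2 + ‖y - y'‖ ^ 2)}

def prodNorm {m n : ℕ} (u : E m) (v : E n) : ℝ := Real.sqrt (‖u‖ ^ 2 + ‖v‖ ^ 2)

def simplex (k : ℕ) : Set (E k) := {x | (∀ i, 0 ≤ x i) ∧ ∑ i, x i = 1}

def unif (k : ℕ) : E k := WithLp.toLp 2 (fun _ : Fin k => (k : ℝ)⁻¹)

def isPolytope {k : ℕ} (S : Set (E k)) : Prop :=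
  ∃ s : Finset (E k), s.Nonempty ∧ S = convexHull ℝ (s : Set (E k))

/-- Auxiliary convexity identity for norms in Euclidean space. -/
lemma aux_normid {m : ℕ} (u v : E m) (l : ℝ) :
    ‖(1 - l) • u + l • v‖ ^ 2
      = (1 - l) * ‖u‖ ^ 2 + l * ‖v‖ ^ 2 - l * (1 - l) * ‖v - u‖ ^ 2 := by
  have h : ∀ w : E m, ‖w‖ ^ 2 = ⟪w, w⟫ := fun w => (real_inner_self_eq_norm_sq w).symm
  rw [h, h, h, h]
  simp only [inner_add_left, inner_add_right, inner_sub_left, inner_sub_right,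
    real_inner_smul_left, real_inner_smul_right]
  rw [real_inner_comm v u]
  ring

set_option maxHeartbeats 2000000 in
/-- Anchored perturbation: if the minimizer `xμσ` of the anchored perturbed
objective is not a minimax strategy of the original game, then updating the anchor strictly
improves the distance to every minimax strategy, up to the stated error terms. -/
theorem anchored_perturbation_distance_improvement
    {m n : ℕ} (A : Matrix (Fin m) (Fin n) ℝ) (X : Set (E m)) (Y : Set (E n))
    (hX : isPolytope X) (hY : isPolytope Y)
    (α : ℝ) (hα : 0 < α)
    (hsub : ∀ x ∈ X, gmax A Y x - vStar A X Y ≥ α * ‖x - projOn (minimaxSet A X Y) x‖)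
    (μ : ℝ) (hμ : 0 < μ)
    (σ : E m) (hσ : σ ∈ X)
    -- `xμσ` is the (unique) minimizer of `x ↦ max_{y ∈ Y} xᵀAy + (μ/2)‖x - σ‖²` over `X`
    (xμσ : E m) (hxμσ : xμσ ∈ X)
    (hxμσmin : ∀ x ∈ X,
      gmax A Y xμσ + μ / 2 * ‖xμσ - σ‖ ^ 2 ≤ gmax A Y x + μ / 2 * ‖x - σ‖ ^ 2)
    (hnot : xμσ ∉ minimaxSet A X Y) :
    ∀ xstar ∈ minimaxSet A X Y, ∀ σ' ∈ X,
      1 / 2 * ‖xstar - σ'‖ ^ 2 ≤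
        1 / 2 * ‖xstar - σ‖ ^ 2 - α ^ 2 / (4 * μ ^ 2) +
          diamXY X Y ^ 2 * μ ^ 2 / α ^ 2 * ‖xμσ - σ'‖ ^ 2 := by
  intro xstar hxstar σ' hσ'
  obtain ⟨sX, hsXne, hXeq⟩ := hX
  obtain ⟨sY, hsYne, hYeq⟩ := hY
  have hXc : IsCompact X := hXeq ▸ sX.finite_toSet.isCompact_convexHull (𝕜 := ℝ)
  have hXconv : Convex ℝ X := hXeq ▸ convex_convexHull ℝ _
  have hYc : IsCompact Y := hYeq ▸ sY.finite_toSet.isCompact_convexHull (𝕜 := ℝ)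
  have hYne : Y.Nonempty := by
    obtain ⟨y0, hy0⟩ := hsYne
    exact ⟨y0, hYeq ▸ subset_convexHull ℝ _ hy0⟩
  -- continuity of pay in y
  have hpayC : ∀ x : E m, Continuous (pay A x) := by
    intro x
    have h : (pay A x) = fun y => ⟪x, (Matrix.toEuclideanLin A).toContinuousLinearMap y⟫ := rfl
    rw [h]
    exact continuous_const.inner (Matrix.toEuclideanLin A).toContinuousLinearMap.continuous
  have hbdd : ∀ x : E m, BddAbove ((pay A x) '' Y) := fun x => (hYc.image (hpayC x)).bddAbove
  have hpay_le : ∀ (x : E m) {y : E n}, y ∈ Y → pay A x y ≤ gmax A Y x :=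
    fun x y hy => le_csSup (hbdd x) ⟨_, hy, rfl⟩
  have hgmax_le : ∀ (x : E m) (c : ℝ), (∀ y ∈ Y, pay A x y ≤ c) → gmax A Y x ≤ c := by
    intro x c hc
    refine csSup_le (hYne.image _) ?_
    rintro z ⟨y, hy, rfl⟩
    exact hc y hy
  -- linearity of pay in x
  have hpaylin : ∀ (a b : ℝ) (u v : E m) (y : E n),
      pay A (a • u + b • v) y = a * pay A u y + b * pay A v y := by
    intro a b u v y
    show ⟪a • u + b • v, toE (A.mulVec y)⟫
        = a * ⟪u, toE (A.mulVec y)⟫ + b * ⟪v, toE (A.mulVec y)⟫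
    rw [inner_add_left, real_inner_smul_left, real_inner_smul_left]
  -- convexity of gmax
  have hgconv : ∀ (l : ℝ), 0 ≤ l → l ≤ 1 → ∀ u v : E m,
      gmax A Y ((1 - l) • u + l • v) ≤ (1 - l) * gmax A Y u + l * gmax A Y v := by
    intro l hl0 hl1 u v
    refine hgmax_le _ _ fun y hy => ?_
    rw [hpaylin]
    exact add_le_add (mul_le_mul_of_nonneg_left (hpay_le u hy) (by linarith))
      (mul_le_mul_of_nonneg_left (hpay_le v hy) hl0)
  -- strong convexity inequality at the minimizer
  have hstrong : ∀ x ∈ X, gmax A Y xμσ + μ / 2 * ‖xμσ - σ‖ ^ 2 + μ / 2 * ‖x - xμσ‖ ^ 2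
      ≤ gmax A Y x + μ / 2 * ‖x - σ‖ ^ 2 := by
    intro x hx
    refine le_of_forall_pos_le_add fun ε hε => ?_
    set N : ℝ := μ / 2 * ‖x - xμσ‖ ^ 2 with hN
    have hN0 : 0 ≤ N := by positivity
    set l : ℝ := min (1/2) (ε / (N + 1)) with hldef
    have hl0 : 0 < l := lt_min (by norm_num) (by positivity)
    have hl1 : l ≤ 1/2 := min_le_left _ _
    have hz : (1 - l) • xμσ + l • x ∈ X :=
      hXconv hxμσ hx (by linarith) hl0.le (by ring)
    have hmin2 := hxμσmin _ hz
    have hc := hgconv l hl0.le (by linarith) xμσ x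
    have hid : ‖(1 - l) • xμσ + l • x - σ‖ ^ 2
        = (1 - l) * ‖xμσ - σ‖ ^ 2 + l * ‖x - σ‖ ^ 2 - l * (1 - l) * ‖x - xμσ‖ ^ 2 := by
      have h1 := aux_normid (xμσ - σ) (x - σ) l
      have h2 : (1 - l) • (xμσ - σ) + l • (x - σ) = (1 - l) • xμσ + l • x - σ := by
        have hll : (1 - l) + l = 1 := by ring
        rw [smul_sub, smul_sub]
        rw [show (1 - l) • xμσ - (1 - l) • σ + (l • x - l • σ)
            = (1 - l) • xμσ + l • x - ((1 - l) + l) • σ by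
          rw [add_smul]; abel]
        rw [hll, one_smul]
      have h3 : x - σ - (xμσ - σ) = x - xμσ := by abel
      rw [h2, h3] at h1
      exact h1
    have hid2 : μ / 2 * ‖(1 - l) • xμσ + l • x - σ‖ ^ 2
        = μ / 2 * ((1 - l) * ‖xμσ - σ‖ ^ 2 + l * ‖x - σ‖ ^ 2
            - l * (1 - l) * ‖x - xμσ‖ ^ 2) := by rw [hid]
    have key : l * (gmax A Y xμσ + μ / 2 * ‖xμσ - σ‖ ^ 2 + μ / 2 * (1 - l) * ‖x - xμσ‖ ^ 2)
        ≤ l * (gmax A Y x + μ / 2 * ‖x - σ‖ ^ 2) := by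
      linarith [hmin2, hc, hid2.le, hid2.ge]
    have hd := le_of_mul_le_mul_left key hl0
    have hsplit : μ / 2 * (1 - l) * ‖x - xμσ‖ ^ 2 = N - l * N := by rw [hN]; ring
    have hlN : l * N ≤ ε := by
      have h1 : l ≤ ε / (N + 1) := min_le_right _ _
      have h2 : l * (N + 1) ≤ (ε / (N + 1)) * (N + 1) :=
        mul_le_mul_of_nonneg_right h1 (by positivity)
      rw [div_mul_cancel₀ _ (by positivity : N + 1 ≠ 0)] at h2
      linarith [hl0.le]
    rw [hsplit] at hd
    linarith
  -- value at minimax points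
  have hv : ∀ x0 ∈ minimaxSet A X Y, vStar A X Y = gmax A Y x0 := by
    intro x0 hx0
    apply le_antisymm
    · exact csInf_le ⟨gmax A Y x0, by rintro z ⟨x, hx, rfl⟩; exact hx0.2 x hx⟩
        ⟨x0, hx0.1, rfl⟩
    · exact le_csInf ⟨gmax A Y x0, x0, hx0.1, rfl⟩
        (by rintro z ⟨x, hx, rfl⟩; exact hx0.2 x hx)
  -- Lipschitz continuity of gmax
  obtain ⟨RY, hRY⟩ : ∃ R : ℝ, ∀ y ∈ Y, ‖y‖ ≤ R := by
    obtain ⟨R, hR⟩ := (hYc.image continuous_norm).bddAbove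
    exact ⟨R, fun y hy => hR (Set.mem_image_of_mem _ hy)⟩
  set L : ℝ := matNorm A * max RY 0 with hLdef
  have hL0 : 0 ≤ L := mul_nonneg (norm_nonneg _) (le_max_right _ _)
  have hAy : ∀ y ∈ Y, ‖toE (A.mulVec y)‖ ≤ L := by
    intro y hy
    have h1 : ‖toE (A.mulVec y)‖ ≤ matNorm A * ‖y‖ := by
      unfold matNorm
      exact (Matrix.toEuclideanLin A).toContinuousLinearMap.le_opNorm y
    have h2 : ‖y‖ ≤ max RY 0 := le_trans (hRY y hy) (le_max_left _ _)
    calc ‖toE (A.mulVec y)‖ ≤ matNorm A * ‖y‖ := h1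
      _ ≤ matNorm A * max RY 0 := mul_le_mul_of_nonneg_left h2 (norm_nonneg _)
  have hlip : ∀ u v : E m, gmax A Y u ≤ gmax A Y v + L * ‖u - v‖ := by
    intro u v
    refine hgmax_le _ _ fun y hy => ?_
    have h1 : pay A u y = pay A v y + ⟪u - v, toE (A.mulVec y)⟫ := by
      simp [pay, inner_sub_left]
    have h2 := real_inner_le_norm (u - v) (toE (A.mulVec y))
    have h3 := hAy y hy
    have h4 := hpay_le v hy
    have h6 : ⟪u - v, toE (A.mulVec y)⟫ ≤ L * ‖u - v‖ :=
      calc ⟪u - v, toE (A.mulVec y)⟫ ≤ ‖u - v‖ * ‖toE (A.mulVec y)‖ := h2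
        _ ≤ ‖u - v‖ * L := mul_le_mul_of_nonneg_left h3 (norm_nonneg _)
        _ = L * ‖u - v‖ := mul_comm _ _
    rw [h1]
    linarith
  have hgC : Continuous (gmax A Y) := by
    have : LipschitzWith L.toNNReal (gmax A Y) := by
      refine LipschitzWith.of_dist_le_mul fun u v => ?_
      have hL' : L ≤ (L.toNNReal : ℝ) := by
        rw [Real.coe_toNNReal']; exact le_max_left _ _
      have h1 := hlip u v
      have h2 := hlip v u
      rw [Real.dist_eq, dist_eq_norm, abs_sub_le_iff]
      have hnr : ‖v - u‖ = ‖u - v‖ := norm_sub_rev _ _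
      rw [hnr] at h2
      have h3 := mul_le_mul_of_nonneg_right hL' (norm_nonneg (u - v))
      exact ⟨by linarith, by linarith⟩
    exact this.continuous
  -- the minimax set is compact
  have hSclosed : IsClosed (minimaxSet A X Y) := by
    have heq : minimaxSet A X Y
        = X ∩ ⋂ x' ∈ X, {x | gmax A Y x ≤ gmax A Y x'} := by
      ext x
      simp only [minimaxSet, Set.mem_setOf_eq, Set.mem_inter_iff, Set.mem_iInter]
    rw [heq]
    exact hXc.isClosed.inter (isClosed_biInter fun x' _ => isClosed_le hgC continuous_const)
  have hScomp : IsCompact (minimaxSet A X Y) :=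
    hXc.of_isClosed_subset hSclosed fun x hx => hx.1
  -- projection of xμσ
  have hex : ∃ p ∈ minimaxSet A X Y, ∀ q ∈ minimaxSet A X Y, ‖xμσ - p‖ ≤ ‖xμσ - q‖ := by
    obtain ⟨p, hpS, hpm⟩ := hScomp.exists_isMinOn ⟨xstar, hxstar⟩
      ((continuous_const.sub continuous_id).norm).continuousOn
    exact ⟨p, hpS, fun q hq => hpm hq⟩
  have hpdef : projOn (minimaxSet A X Y) xμσ = hex.choose := by
    unfold projOn
    rw [dif_pos hex]
  set p : E m := hex.choose with hpd
  have hp := hex.choose_spec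
  have hpS : p ∈ minimaxSet A X Y := hp.1
  have hpX : p ∈ X := hpS.1
  have hvstar : vStar A X Y = gmax A Y xstar := hv xstar hxstar
  have hvp : vStar A X Y = gmax A Y p := hv p hpS
  have hr0 : 0 < ‖xμσ - p‖ := by
    rw [norm_pos_iff, sub_ne_zero]
    intro h
    exact hnot (h ▸ hpS)
  have hsubx := hsub xμσ hxμσ
  rw [hpdef] at hsubx
  -- step 1 : μ * ‖xμσ - σ‖ ≥ α
  have htri : ‖p - σ‖ ≤ ‖p - xμσ‖ + ‖xμσ - σ‖ := by
    have := dist_triangle p xμσ σ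
    simpa [dist_eq_norm] using this
  have hrev : ‖p - xμσ‖ = ‖xμσ - p‖ := norm_sub_rev _ _
  have hsc_p := hstrong p hpX
  have hs : α ≤ μ * ‖xμσ - σ‖ := by
    rw [hrev] at htri hsc_p
    have hsq : ‖p - σ‖ ^ 2 ≤ (‖xμσ - p‖ + ‖xμσ - σ‖) ^ 2 :=
      pow_le_pow_left₀ (norm_nonneg _) htri 2
    have hsq' : μ / 2 * ‖p - σ‖ ^ 2 ≤ μ / 2 * (‖xμσ - p‖ + ‖xμσ - σ‖) ^ 2 :=
      mul_le_mul_of_nonneg_left hsq (by positivity)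
    have hkey : α * ‖xμσ - p‖ ≤ μ * (‖xμσ - p‖ * ‖xμσ - σ‖) := by
      linarith [hsc_p, hsq', hsubx, hvp.le, hvp.ge]
    by_contra hcon
    push_neg at hcon
    have := mul_lt_mul_of_pos_right hcon hr0
    linarith
  -- step 2 : ‖xstar - xμσ‖² + ‖xμσ - σ‖² ≤ ‖xstar - σ‖²
  have hGx0 : vStar A X Y ≤ gmax A Y xμσ := by
    linarith [hsubx, mul_nonneg hα.le (norm_nonneg (xμσ - p))]
  have hsc_star := hstrong xstar hxstar.1
  have h2 : ‖xstar - xμσ‖ ^ 2 + ‖xμσ - σ‖ ^ 2 ≤ ‖xstar - σ‖ ^ 2 := by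
    have h2' : μ / 2 * (‖xstar - xμσ‖ ^ 2 + ‖xμσ - σ‖ ^ 2) ≤ μ / 2 * ‖xstar - σ‖ ^ 2 := by
      linarith [hsc_star, hGx0, hvstar.le, hvstar.ge]
    exact le_of_mul_le_mul_left h2' (by positivity)
  -- step 3 : diameter bound
  obtain ⟨RX, hRX⟩ : ∃ R : ℝ, ∀ x ∈ X, ‖x‖ ≤ R := by
    obtain ⟨R, hR⟩ := (hXc.image continuous_norm).bddAbove
    exact ⟨R, fun x hx => hR (Set.mem_image_of_mem _ hx)⟩
  have hDmem : ∀ u ∈ X, ∀ v ∈ X, ‖u - v‖ ≤ diamXY X Y := by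
    intro u hu v hv'
    obtain ⟨y0, hy0⟩ := hYne
    have hb : BddAbove {d | ∃ x ∈ X, ∃ y ∈ Y, ∃ x' ∈ X, ∃ y' ∈ Y,
        d = Real.sqrt (‖x - x'‖ ^ 2 + ‖y - y'‖ ^ 2)} := by
      refine ⟨Real.sqrt ((RX + RX) ^ 2 + (RY + RY) ^ 2), ?_⟩
      rintro d ⟨x, hx, y, hy, x', hx', y', hy', rfl⟩
      apply Real.sqrt_le_sqrt
      have h1 : ‖x - x'‖ ≤ RX + RX :=
        (norm_sub_le _ _).trans (add_le_add (hRX _ hx) (hRX _ hx'))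
      have h2 : ‖y - y'‖ ≤ RY + RY :=
        (norm_sub_le _ _).trans (add_le_add (hRY _ hy) (hRY _ hy'))
      exact add_le_add (pow_le_pow_left₀ (norm_nonneg _) h1 2)
        (pow_le_pow_left₀ (norm_nonneg _) h2 2)
    have hmem : ‖u - v‖ ∈ {d | ∃ x ∈ X, ∃ y ∈ Y, ∃ x' ∈ X, ∃ y' ∈ Y,
        d = Real.sqrt (‖x - x'‖ ^ 2 + ‖y - y'‖ ^ 2)} := by
      refine ⟨u, hu, y0, hy0, v, hv', y0, hy0, ?_⟩
      rw [sub_self, norm_zero]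
      norm_num [Real.sqrt_sq (norm_nonneg (u - v))]
    exact le_csSup hb hmem
  have hVD : ‖xstar - σ‖ ≤ diamXY X Y := hDmem xstar hxstar.1 σ hσ
  have htri2 : ‖xstar - σ'‖ ≤ ‖xstar - xμσ‖ + ‖xμσ - σ'‖ := by
    have := dist_triangle xstar xμσ σ'
    simpa [dist_eq_norm] using this
  -- final algebra
  set β : ℝ := α / μ with hβdef
  have hβ0 : 0 < β := div_pos hα hμ
  have hβeq : α = β * μ := by rw [hβdef, div_mul_cancel₀ _ hμ.ne']
  have e1 : α ^ 2 / (4 * μ ^ 2) = β ^ 2 / 4 := by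
    rw [hβeq]; field_simp
  have e2 : diamXY X Y ^ 2 * μ ^ 2 / α ^ 2 = diamXY X Y ^ 2 / β ^ 2 := by
    rw [hβeq]; field_simp
  rw [e1, e2]
  have hβs : β ≤ ‖xμσ - σ‖ := by
    rw [hβeq] at hs
    exact le_of_mul_le_mul_right (by linarith [hs]) hμ
  have hβ2 : β ^ 2 ≤ ‖xμσ - σ‖ ^ 2 := pow_le_pow_left₀ hβ0.le hβs 2
  have hVD2 : ‖xstar - σ‖ ^ 2 ≤ diamXY X Y ^ 2 :=
    pow_le_pow_left₀ (norm_nonneg _) hVD 2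
  have ha2 : ‖xstar - xμσ‖ ^ 2 + β ^ 2 ≤ diamXY X Y ^ 2 := by
    linarith [h2, hβ2, hVD2]
  have hw2 : ‖xstar - σ'‖ ^ 2 ≤ (‖xstar - xμσ‖ + ‖xμσ - σ'‖) ^ 2 :=
    pow_le_pow_left₀ (norm_nonneg _) htri2 2
  have key : 1 / 2 * ‖xstar - σ'‖ ^ 2 - (1 / 2 * ‖xstar - σ‖ ^ 2 - β ^ 2 / 4)
      ≤ diamXY X Y ^ 2 / β ^ 2 * ‖xμσ - σ'‖ ^ 2 := by
    rw [show diamXY X Y ^ 2 / β ^ 2 * ‖xμσ - σ'‖ ^ 2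
        = diamXY X Y ^ 2 * ‖xμσ - σ'‖ ^ 2 / β ^ 2 from by ring,
      le_div_iff₀ (by positivity : (0:ℝ) < β ^ 2)]
    have hw2' : β ^ 2 / 2 * ‖xstar - σ'‖ ^ 2
        ≤ β ^ 2 / 2 * (‖xstar - xμσ‖ + ‖xμσ - σ'‖) ^ 2 :=
      mul_le_mul_of_nonneg_left hw2 (by positivity)
    have hA2 : β ^ 2 / 2 * (‖xstar - xμσ‖ ^ 2 + ‖xμσ - σ‖ ^ 2)
        ≤ β ^ 2 / 2 * ‖xstar - σ‖ ^ 2 :=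
      mul_le_mul_of_nonneg_left h2 (by positivity)
    have hB2 : β ^ 2 / 2 * β ^ 2 ≤ β ^ 2 / 2 * ‖xμσ - σ‖ ^ 2 :=
      mul_le_mul_of_nonneg_left hβ2 (by positivity)
    have hint1 : (0:ℝ) ≤ (‖xstar - xμσ‖ * ‖xμσ - σ'‖ - β ^ 2 / 2) ^ 2 := sq_nonneg _
    have hint2 : (0:ℝ) ≤ (diamXY X Y ^ 2 - β ^ 2 - ‖xstar - xμσ‖ ^ 2) * ‖xμσ - σ'‖ ^ 2 :=
      mul_nonneg (by linarith [ha2]) (sq_nonneg _)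
    linarith [hw2', hA2, hB2, hint1, hint2, sq_nonneg (β * ‖xμσ - σ'‖)]
  linarith [key]
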